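/- arXiv:1709.08927 — 2 statements merged into one kernel-verified Lean document; each statement's English description precedes it below -/
import Mathlib

section
/- Let S₁ = R₁ ⊕ N₁ and S₂ = R₂ ⊕ N₂ be commutative ℝ-algebras where R₁, R₂ are C^∞-rings and N₁, N₂ are nilpotent ideals (N₁^{l₁+1} = 0, N₂^{l₂+1} = 0), each Sᵢ equipped with the canonical extended C^∞-ring structure. If f : R₁ → R₂ is a C^∞-ring homomorphism and g : S₁ → S₂ is any ℝ-algebra homomorphism extending f (i.e. g|_{R₁} = f and g(N₁) ⊆ N₂), then g is automatically a C^∞-ring homomorphism. -/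
/-- Partial derivative of `f : (Fin k → ℝ) → ℝ` with respect to the `i`-th variable. -/
noncomputable def partialDeriv' {k : ℕ} (i : Fin k) (f : (Fin k → ℝ) → ℝ) :
    (Fin k → ℝ) → ℝ :=
  fun x => deriv (fun t => f (Function.update x i t)) (x i)

/-- Iterated partial derivative `∂₁^{α 1} ⋯ ∂ₖ^{α k} f`. -/
noncomputable def multiDeriv {k : ℕ} (α : Fin k → ℕ) (f : (Fin k → ℝ) → ℝ) :
    (Fin k → ℝ) → ℝ :=
  (List.finRange k).foldr (fun i g => (partialDeriv' i)^[α i] g) f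

/-- A `C^∞`-ring structure on a commutative `ℝ`-algebra `R` : every smooth function
`ℝᵏ → ℝ` induces a `k`-ary operation on `R`, compatibly with projections, composition and
the ring operations. (The operation map is total; the axioms only constrain it on smooth
functions.) -/
structure SmoothRingStruct (R : Type) [CommRing R] [Algebra ℝ R] where
  op : ∀ ⦃n : ℕ⦄, ((Fin n → ℝ) → ℝ) → (Fin n → R) → R
  op_proj : ∀ {n : ℕ} (i : Fin n) (x : Fin n → R), op (fun v => v i) x = x i
  op_const : ∀ {n : ℕ} (c : ℝ) (x : Fin n → R), op (fun _ => c) x = algebraMap ℝ R c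
  op_add : ∀ x : Fin 2 → R, op (fun v => v 0 + v 1) x = x 0 + x 1
  op_mul : ∀ x : Fin 2 → R, op (fun v => v 0 * v 1) x = x 0 * x 1
  op_comp : ∀ {n m : ℕ} (f : (Fin m → ℝ) → ℝ), ContDiff ℝ (⊤ : ℕ∞) f →
    ∀ (g : Fin m → (Fin n → ℝ) → ℝ), (∀ j, ContDiff ℝ (⊤ : ℕ∞) (g j)) →
    ∀ x : Fin n → R, op (fun v => f fun j => g j v) x = op f fun j => op (g j) x


lemma partialDeriv'_eq_fderiv {k : ℕ} (i : Fin k) {f : (Fin k → ℝ) → ℝ}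
    (hf : ContDiff ℝ (⊤ : ℕ∞) f) :
    partialDeriv' i f = fun x => fderiv ℝ f x (Pi.single i 1) := by
  funext x
  have hu : HasDerivAt (fun t : ℝ => Function.update x i t) (Pi.single i 1) (x i) := by
    rw [hasDerivAt_pi]
    intro j
    rcases eq_or_ne j i with rfl | hj
    · simpa [Function.update_self] using hasDerivAt_id' (x j)
    · simpa [Function.update_of_ne hj, Pi.single_eq_of_ne hj] using
        hasDerivAt_const (x i) (x j)
  have hF : HasFDerivAt f (fderiv ℝ f x) (Function.update x i (x i)) := by
    rw [Function.update_eq_self]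
    exact (hf.differentiable (by simp) x).hasFDerivAt
  exact (hF.comp_hasDerivAt (x i) hu).deriv

lemma contDiff_partialDeriv' {k : ℕ} (i : Fin k) {f : (Fin k → ℝ) → ℝ}
    (hf : ContDiff ℝ (⊤ : ℕ∞) f) : ContDiff ℝ (⊤ : ℕ∞) (partialDeriv' i f) := by
  rw [partialDeriv'_eq_fderiv i hf]
  exact (hf.fderiv_right (by simp)).clm_apply contDiff_const

lemma contDiff_iterPartial {k : ℕ} (i : Fin k) (n : ℕ) {f : (Fin k → ℝ) → ℝ}
    (hf : ContDiff ℝ (⊤ : ℕ∞) f) : ContDiff ℝ (⊤ : ℕ∞) ((partialDeriv' i)^[n] f) := by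
  induction n with
  | zero => exact hf
  | succ n ih => rw [Function.iterate_succ_apply']; exact contDiff_partialDeriv' i ih

lemma contDiff_multiDeriv {k : ℕ} (α : Fin k → ℕ) {h : (Fin k → ℝ) → ℝ}
    (hh : ContDiff ℝ (⊤ : ℕ∞) h) : ContDiff ℝ (⊤ : ℕ∞) (multiDeriv α h) := by
  unfold multiDeriv
  induction List.finRange k with
  | nil => exact hh
  | cons i L ih => exact contDiff_iterPartial i (α i) ih

/-- Any `ℝ`-algebra homomorphism between nilpotent extensions `Sᵢ = Rᵢ ⊕ Nᵢ` (each carrying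
the canonical Taylor-extended `C^∞`-ring structure) which extends a `C^∞`-ring
homomorphism `f : R₁ → R₂` is automatically a `C^∞`-ring homomorphism. -/
theorem stmt_15 (R₁ S₁ R₂ S₂ : Type)
    [CommRing R₁] [Algebra ℝ R₁] [CommRing S₁] [Algebra ℝ S₁]
    [CommRing R₂] [Algebra ℝ R₂] [CommRing S₂] [Algebra ℝ S₂]
    (SR₁ : SmoothRingStruct R₁) (SR₂ : SmoothRingStruct R₂)
    (incl₁ : R₁ →ₐ[ℝ] S₁) (proj₁ : S₁ →ₐ[ℝ] R₁) (hpi₁ : ∀ r, proj₁ (incl₁ r) = r)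
    (hsplit₁ : ∀ x : S₁, ∃ r : R₁, x - incl₁ r ∈ RingHom.ker proj₁.toRingHom)
    (incl₂ : R₂ →ₐ[ℝ] S₂) (proj₂ : S₂ →ₐ[ℝ] R₂) (hpi₂ : ∀ r, proj₂ (incl₂ r) = r)
    (hsplit₂ : ∀ x : S₂, ∃ r : R₂, x - incl₂ r ∈ RingHom.ker proj₂.toRingHom)
    (l₁ l₂ : ℕ)
    (hnil₁ : (RingHom.ker proj₁.toRingHom) ^ (l₁ + 1) = ⊥)
    (hnil₂ : (RingHom.ker proj₂.toRingHom) ^ (l₂ + 1) = ⊥)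
    (SS₁ : SmoothRingStruct S₁) (SS₂ : SmoothRingStruct S₂)
    -- `SS₁` and `SS₂` are the canonical Taylor-extended `C^∞`-ring structures
    (hSS₁ : ∀ (k : ℕ) (h : (Fin k → ℝ) → ℝ), ContDiff ℝ (⊤ : ℕ∞) h →
      ∀ (r : Fin k → R₁) (ν : Fin k → S₁), (∀ i, ν i ∈ RingHom.ker proj₁.toRingHom) →
        SS₁.op h (fun i => incl₁ (r i) + ν i) =
          ∑ d ∈ Finset.range (k * l₁ + 1), (1 / (d.factorial : ℝ)) •
            ∑ α ∈ Finset.Nat.antidiagonalTuple k d,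
              incl₁ (SR₁.op (multiDeriv α h) r) * ∏ i, ν i ^ α i)
    (hSS₂ : ∀ (k : ℕ) (h : (Fin k → ℝ) → ℝ), ContDiff ℝ (⊤ : ℕ∞) h →
      ∀ (r : Fin k → R₂) (ν : Fin k → S₂), (∀ i, ν i ∈ RingHom.ker proj₂.toRingHom) →
        SS₂.op h (fun i => incl₂ (r i) + ν i) =
          ∑ d ∈ Finset.range (k * l₂ + 1), (1 / (d.factorial : ℝ)) •
            ∑ α ∈ Finset.Nat.antidiagonalTuple k d,
              incl₂ (SR₂.op (multiDeriv α h) r) * ∏ i, ν i ^ α i)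
    -- `f` is a `C^∞`-ring homomorphism `R₁ → R₂`
    (f : R₁ →ₐ[ℝ] R₂)
    (hf : ∀ (k : ℕ) (h : (Fin k → ℝ) → ℝ), ContDiff ℝ (⊤ : ℕ∞) h → ∀ x : Fin k → R₁,
      f (SR₁.op h x) = SR₂.op h fun i => f (x i))
    -- `g` is any `ℝ`-algebra homomorphism extending `f`
    (g : S₁ →ₐ[ℝ] S₂)
    (hg₁ : ∀ r : R₁, g (incl₁ r) = incl₂ (f r))
    (hg₂ : ∀ x : S₁, x ∈ RingHom.ker proj₁.toRingHom →
      g x ∈ RingHom.ker proj₂.toRingHom) :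
    ∀ (k : ℕ) (h : (Fin k → ℝ) → ℝ), ContDiff ℝ (⊤ : ℕ∞) h → ∀ y : Fin k → S₁,
      g (SS₁.op h y) = SS₂.op h fun i => g (y i) := by
  intro k h hcd y
  choose r hr using fun i => hsplit₁ (y i)
  set ν : Fin k → S₁ := fun i => y i - incl₁ (r i) with hνdef
  have hνmem : ∀ i, ν i ∈ RingHom.ker proj₁.toRingHom := fun i => hr i
  have hyi : y = fun i => incl₁ (r i) + ν i := funext fun i => by
    simp [hνdef]
  have hgν : ∀ i, g (ν i) ∈ RingHom.ker proj₂.toRingHom := fun i => hg₂ _ (hνmem i)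
  have hpow₁ : ∀ i, g (ν i) ^ (l₁ + 1) = 0 := by
    intro i
    have h1 : ν i ^ (l₁ + 1) = 0 := by
      have := Ideal.pow_mem_pow (hνmem i) (l₁ + 1)
      rwa [hnil₁, Ideal.mem_bot] at this
    rw [← map_pow, h1, map_zero]
  have hpow₂ : ∀ i, g (ν i) ^ (l₂ + 1) = 0 := by
    intro i
    have := Ideal.pow_mem_pow (hgν i) (l₂ + 1)
    rwa [hnil₂, Ideal.mem_bot] at this
  set T : ℕ → S₂ := fun d => (1 / (d.factorial : ℝ)) •
      ∑ α ∈ Finset.Nat.antidiagonalTuple k d,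
        incl₂ (SR₂.op (multiDeriv α h) (fun i => f (r i))) * ∏ i, g (ν i) ^ α i with hT
  have hTzero : ∀ l : ℕ, (∀ i, g (ν i) ^ (l + 1) = 0) → ∀ d, k * l + 1 ≤ d → T d = 0 := by
    intro l hl d hd
    rw [hT]
    simp only
    rw [Finset.sum_eq_zero, smul_zero]
    intro α hα
    rw [Finset.Nat.mem_antidiagonalTuple] at hα
    have hex : ∃ i, l + 1 ≤ α i := by
      by_contra hcon
      push_neg at hcon
      have hle : ∑ i, α i ≤ ∑ _i : Fin k, l :=
        Finset.sum_le_sum fun i _ => by have := hcon i; omega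
      rw [hα, Finset.sum_const, Finset.card_univ, Fintype.card_fin, smul_eq_mul] at hle
      omega
    obtain ⟨i, hi⟩ := hex
    have hzero : g (ν i) ^ α i = 0 := by
      have hsplit : g (ν i) ^ α i = g (ν i) ^ (l + 1) * g (ν i) ^ (α i - (l + 1)) := by
        rw [← pow_add]; congr 1; omega
      rw [hsplit, hl i, zero_mul]
    rw [Finset.prod_eq_zero (Finset.mem_univ i) hzero, mul_zero]
  have hL : g (SS₁.op h y) = ∑ d ∈ Finset.range (k * l₁ + 1), T d := by
    rw [hyi, hSS₁ k h hcd r ν hνmem, map_sum]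
    refine Finset.sum_congr rfl fun d _ => ?_
    rw [map_smul, map_sum]
    congr 1
    refine Finset.sum_congr rfl fun α _ => ?_
    rw [map_mul, hg₁, hf _ _ (contDiff_multiDeriv α hcd), map_prod]
    exact congrArg _ (Finset.prod_congr rfl fun i _ => by rw [map_pow])
  have hR : SS₂.op h (fun i => g (y i)) = ∑ d ∈ Finset.range (k * l₂ + 1), T d := by
    have hgy : (fun i => g (y i)) = fun i => incl₂ (f (r i)) + g (ν i) := by
      funext i
      conv_lhs => rw [hyi]
      simp [map_add, hg₁]
    rw [hgy, hSS₂ k h hcd (fun i => f (r i)) (fun i => g (ν i)) hgν]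
  have hext : ∀ m : ℕ, m ≤ k * l₁ + k * l₂ → (∀ d, m + 1 ≤ d → T d = 0) →
      ∑ d ∈ Finset.range (m + 1), T d = ∑ d ∈ Finset.range (k * l₁ + k * l₂ + 1), T d := by
    intro m hm hz
    refine Finset.sum_subset (Finset.range_subset_range.2 (by omega)) fun d hd hd' => ?_
    rw [Finset.mem_range] at hd'
    exact hz d (by omega)
  rw [hL, hR, hext (k * l₁) (by omega) (hTzero l₁ hpow₁),
    hext (k * l₂) (by omega) (hTzero l₂ hpow₂)]
end

section
/- Let Λ = ⋀(ℂ^s), Ê = Λ^{⊕r}, and let m̂₁, ..., m̂_n ∈ End_Λ(Ê) be pairwise commuting endomorphisms. Then there exists a complete set of orthogonal idempotents ê₁, ..., ê_l ∈ End_Λ(Ê) such that: (1) each ê_j commutes with every m̂_i; (2) Ê = ê₁Ê ⊕ ... ⊕ ê_lÊ with each summand a free Λ-module invariant under all m̂_i; (3) to each j there corresponds an n-tuple (λ¹,...,λⁿ) of complex numbers with λⁱ an eigenvalue of the body m_{i,(0)} of m̂_i, such that the body of m̂_i restricted to ê_jÊ has λⁱ as its only eigenvalue. -/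
open ExteriorAlgebra

noncomputable abbrev Grassmann (s : ℕ) : Type := ExteriorAlgebra ℂ (Fin s → ℂ)

noncomputable abbrev grassmannBody (s r : ℕ)
    (M : Matrix (Fin r) (Fin r) (Grassmann s)) : Matrix (Fin r) (Fin r) ℂ :=
  M.map (algebraMapInv (R := ℂ) (M := Fin s → ℂ))

/-!
Pairwise commuting `m̂ᵢ` generate a commutative finite-dimensional `ℂ`-algebra `S`. Being Artinian,
`S` maps onto the product of its residue fields, all equal to `ℂ`, with nilpotent kernel; lifting
the standard idempotents of that product gives the `êⱼ`, and the residue characters give the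
eigenvalues `λʲᵢ`, with `(m̂ᵢ - λʲᵢ) êⱼ` nilpotent.

Over `Λ` the elements of zero body form a nilpotent ideal (a product of more than `s` of them
vanishes by degree), so a matrix over `Λ` with zero body is nilpotent. Hence two commuting
idempotents with the same body are equal: a splitting `C D` (with `D C = 1`) of the body of `êⱼ`
lifts to `êⱼ = X Z` with `Z X = 1`, so `êⱼ Ê` is free on the columns of `X`; and a nonzero `êⱼ`
has nonzero body, which forces `λʲᵢ` into the spectrum of the body of `m̂ᵢ`.
-/

namespace ExteriorAlgebra

section Filtration

variable (R M : Type*) [CommRing R] [AddCommGroup M] [Module R M]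

def degreeFiltration (k : ℕ) : Submodule R (ExteriorAlgebra R M) :=
  ⨆ i, ⋀[R]^(i + k) M

variable {R M}

lemma exteriorPower_le_degreeFiltration {k m : ℕ} (hkm : k ≤ m) :
    ⋀[R]^m M ≤ degreeFiltration R M k := by
  obtain ⟨i, rfl⟩ := Nat.exists_eq_add_of_le' hkm
  exact le_iSup (fun i => ⋀[R]^(i + k) M) i

lemma degreeFiltration_mul_le (k l : ℕ) :
    degreeFiltration R M k * degreeFiltration R M l ≤ degreeFiltration R M (k + l) := by
  simp only [degreeFiltration, Submodule.iSup_mul, Submodule.mul_iSup, iSup_le_iff]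
  intro i j
  rw [exteriorPower, exteriorPower, ← pow_add]
  exact exteriorPower_le_degreeFiltration (by omega)

lemma degreeFiltration_antitone : Antitone (degreeFiltration R M) := fun _ _ hkl =>
  iSup_le fun _ => exteriorPower_le_degreeFiltration (by omega)

lemma sub_algebraMap_algebraMapInv_mem_degreeFiltration_one (x : ExteriorAlgebra R M) :
    x - algebraMap R _ (algebraMapInv x) ∈ degreeFiltration R M 1 := by
  induction x using ExteriorAlgebra.induction with
  | algebraMap c => simp [algebraMap_leftInverse M c]
  | ι v =>
    rw [show algebraMapInv (ι R v) = 0 from lift_ι_apply _ _ _ _, map_zero, sub_zero]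
    refine exteriorPower_le_degreeFiltration le_rfl ?_
    simp
  | mul a b ha hb =>
    have hab := degreeFiltration_antitone (Nat.le_succ 1)
      (degreeFiltration_mul_le 1 1 (Submodule.mul_mem_mul ha hb))
    have key : a * b - algebraMap R _ (algebraMapInv (a * b)) =
        (a - algebraMap R _ (algebraMapInv a)) * (b - algebraMap R _ (algebraMapInv b)) +
          algebraMapInv a • (b - algebraMap R _ (algebraMapInv b)) +
          algebraMapInv b • (a - algebraMap R _ (algebraMapInv a)) := by
      simp only [map_mul, Algebra.smul_def, mul_sub, sub_mul,
        Algebra.commutes (algebraMapInv b) a,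
        Algebra.commutes (algebraMapInv b) (algebraMap R _ (algebraMapInv a))]
      abel
    rw [key]
    exact add_mem (add_mem hab (Submodule.smul_mem _ _ hb)) (Submodule.smul_mem _ _ ha)
  | add a b ha hb =>
    rw [map_add, map_add, add_sub_add_comm]
    exact add_mem ha hb

lemma ker_algebraMapInv_pow_le (k : ℕ) :
    LinearMap.ker (algebraMapInv : ExteriorAlgebra R M →ₐ[R] R).toLinearMap ^ k ≤
      degreeFiltration R M k := by
  induction k with
  | zero => simpa using exteriorPower_le_degreeFiltration (R := R) (M := M) (le_refl 0)
  | succ k ih =>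
    rw [pow_succ, Submodule.mul_le]
    intro x hx y hy
    have hy0 : algebraMapInv y = 0 := hy
    have hy' : y ∈ degreeFiltration R M 1 := by
      simpa [hy0] using sub_algebraMap_algebraMapInv_mem_degreeFiltration_one y
    exact degreeFiltration_mul_le k 1 (Submodule.mul_mem_mul (ih hx) hy')

end Filtration

variable {K V : Type*} [Field K] [AddCommGroup V] [Module K V] [FiniteDimensional K V]

lemma exteriorPower_eq_bot {m : ℕ} (hm : Module.finrank K V < m) : ⋀[K]^m V = ⊥ := by
  rw [← ιMulti_span_fixedDegree, Submodule.span_eq_bot]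
  rintro _ ⟨v, rfl⟩
  refine AlternatingMap.map_linearDependent _ v fun hv => ?_
  have := hv.fintype_card_le_finrank
  rw [Fintype.card_fin] at this
  omega

instance : Module.Finite K (ExteriorAlgebra K V) :=
  .of_basis (Module.finBasis K V).ExteriorAlgebra

lemma isNilpotent_ker_algebraMapInv :
    IsNilpotent (LinearMap.ker (algebraMapInv : ExteriorAlgebra K V →ₐ[K] K).toLinearMap) := by
  refine ⟨Module.finrank K V + 1, le_bot_iff.mp ((ker_algebraMapInv_pow_le _).trans ?_)⟩
  exact iSup_le fun i => (exteriorPower_eq_bot (by omega)).le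

end ExteriorAlgebra

section NilpotentEntries

variable {R A : Type*} [CommSemiring R] [Semiring A] [Algebra R A]
  {n : Type*} [Fintype n] [DecidableEq n]

lemma Matrix.pow_apply_mem_pow {J : Submodule R A} {M : Matrix n n A} (hM : ∀ i j, M i j ∈ J)
    (k : ℕ) (i j : n) : (M ^ k) i j ∈ J ^ k := by
  induction k generalizing j with
  | zero =>
    rw [pow_zero, pow_zero, Matrix.one_apply]
    split_ifs
    · exact Submodule.one_le.mp le_rfl
    · exact zero_mem _
  | succ k ih =>
    rw [pow_succ, pow_succ, Matrix.mul_apply]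
    exact sum_mem fun l _ => Submodule.mul_mem_mul (ih l) (hM l j)

lemma Matrix.isNilpotent_of_forall_mem {J : Submodule R A} (hJ : IsNilpotent J)
    {M : Matrix n n A} (hM : ∀ i j, M i j ∈ J) : IsNilpotent M := by
  obtain ⟨k, hk⟩ := hJ
  refine ⟨k, Matrix.ext fun i j => ?_⟩
  simpa [hk] using Matrix.pow_apply_mem_pow hM k i j

end NilpotentEntries

section NilpotentAugmentation

variable {K A : Type*} [CommRing K] [Ring A] [Algebra K A] {π : A →ₐ[K] K}
  {n : Type*} [Fintype n] [DecidableEq n]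

lemma Matrix.isNilpotent_of_map_eq_zero (hπ : IsNilpotent (LinearMap.ker π.toLinearMap))
    {M : Matrix n n A} (h : M.map π = 0) : IsNilpotent M :=
  Matrix.isNilpotent_of_forall_mem hπ fun i j => congr_fun (congr_fun h i) j

lemma Matrix.isUnit_of_map_eq_one (hπ : IsNilpotent (LinearMap.ker π.toLinearMap))
    {M : Matrix n n A} (h : M.map π = 1) : IsUnit M := by
  have : IsNilpotent (1 - M) := Matrix.isNilpotent_of_map_eq_zero hπ (by
    rw [Matrix.map_sub _ (map_sub π), h, Matrix.map_one _ (map_zero π) (map_one π), sub_self])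
  simpa using this.isUnit_one_sub

lemma Matrix.eq_of_map_eq_of_isIdempotentElem (hπ : IsNilpotent (LinearMap.ker π.toLinearMap))
    {e f : Matrix n n A} (he : IsIdempotentElem e) (hf : IsIdempotentElem f) (hef : Commute e f)
    (h : e.map π = f.map π) : e = f :=
  eq_of_isNilpotent_sub_of_isIdempotentElem_of_commute he hf
    (Matrix.isNilpotent_of_map_eq_zero hπ (by rw [Matrix.map_sub _ (map_sub π), h, sub_self])) hef

lemma Matrix.map_ne_zero_of_isIdempotentElem (hπ : IsNilpotent (LinearMap.ker π.toLinearMap))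
    {e : Matrix n n A} (he : IsIdempotentElem e) (he0 : e ≠ 0) : e.map π ≠ 0 := fun h =>
  he0 <| Matrix.eq_of_map_eq_of_isIdempotentElem hπ he IsIdempotentElem.zero (Commute.zero_right e)
    (by rw [h, Matrix.map_zero _ (map_zero π)])

end NilpotentAugmentation

section SplittingIdempotents

variable {K A : Type*} [Field K] [Ring A] [Algebra K A] {π : A →ₐ[K] K}
  {n : Type*} [Fintype n] [DecidableEq n]

lemma Matrix.exists_mul_eq_and_mul_eq_one_of_isIdempotentElem {E : Matrix n n K}
    (hE : IsIdempotentElem E) :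
    ∃ (d : ℕ) (C : Matrix n (Fin d) K) (D : Matrix (Fin d) n K), C * D = E ∧ D * C = 1 := by
  let f := Matrix.toLin' E
  let b := Module.finBasis K (LinearMap.range f)
  refine ⟨_, LinearMap.toMatrix b (Pi.basisFun K n) (LinearMap.range f).subtype,
    LinearMap.toMatrix (Pi.basisFun K n) b f.rangeRestrict, ?_, ?_⟩
  · rw [← LinearMap.toMatrix_comp, LinearMap.rangeRestrict, LinearMap.subtype_comp_codRestrict,
      LinearMap.toMatrix_eq_toMatrix', LinearMap.toMatrix'_toLin']
  · rw [← LinearMap.toMatrix_comp, ← LinearMap.toMatrix_id b]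
    congr 1
    ext ⟨_, v, rfl⟩ : 2
    simp [f, Matrix.mulVec_mulVec, hE.eq]

lemma Matrix.exists_mul_eq_and_mul_eq_one_of_isIdempotentElem_of_isNilpotent_ker
    (hπ : IsNilpotent (LinearMap.ker π.toLinearMap)) {e : Matrix n n A} (he : IsIdempotentElem e) :
    ∃ (d : ℕ) (X : Matrix n (Fin d) A) (Z : Matrix (Fin d) n A), X * Z = e ∧ Z * X = 1 := by
  set E := e.map π
  obtain ⟨d, C, D, hCD, hDC⟩ :=
    Matrix.exists_mul_eq_and_mul_eq_one_of_isIdempotentElem (he.map π.mapMatrix)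
  change C * D = E at hCD
  have hDC' (M : Matrix (Fin d) n K) : D * (C * M) = M := by
    rw [← Matrix.mul_assoc, hDC, Matrix.one_mul]
  have hπι : ⇑π ∘ algebraMap K A = id := funext π.commutes
  -- Lift the splitting `E = C D` of the body to `e = X Z`, correcting `D` by a unit.
  obtain ⟨X, hXe⟩ : ∃ X, X = e * C.map (algebraMap K A) := ⟨_, rfl⟩
  obtain ⟨Y, hYe⟩ : ∃ Y, Y = D.map (algebraMap K A) * e := ⟨_, rfl⟩
  have hX : X.map π = E * C := by rw [hXe, Matrix.map_mul, Matrix.map_map, hπι, Matrix.map_id]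
  have hY : Y.map π = D * E := by rw [hYe, Matrix.map_mul, Matrix.map_map, hπι, Matrix.map_id]
  have hYX : (Y * X).map π = 1 := by
    rw [Matrix.map_mul, hX, hY]
    simp only [← hCD, Matrix.mul_assoc, hDC, Matrix.mul_one]
  obtain ⟨G, -, hGYX⟩ := isUnit_iff_exists.mp (Matrix.isUnit_of_map_eq_one hπ hYX)
  have hG : G.map π = 1 := calc
    G.map π = G.map π * (Y * X).map π := by rw [hYX, Matrix.mul_one]
    _ = 1 := by rw [← Matrix.map_mul, hGYX, Matrix.map_one _ (map_zero π) (map_one π)]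
  have hZX : (G * Y) * X = 1 := by rw [Matrix.mul_assoc, hGYX]
  refine ⟨d, X, G * Y, Eq.symm <| Matrix.eq_of_map_eq_of_isIdempotentElem hπ he ?_ ?_ ?_, hZX⟩
  · rw [IsIdempotentElem, Matrix.mul_assoc, ← Matrix.mul_assoc (G * Y), hZX, Matrix.one_mul]
  · have heX : e * X = X := by rw [hXe, ← Matrix.mul_assoc, he.eq]
    have hYe' : Y * e = Y := by rw [hYe, Matrix.mul_assoc, he.eq]
    rw [Commute, SemiconjBy, ← Matrix.mul_assoc, heX, Matrix.mul_assoc, Matrix.mul_assoc,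
      hYe']
  · change E = _
    rw [Matrix.map_mul, Matrix.map_mul, hX, hY, hG, Matrix.one_mul]
    simp only [← hCD, Matrix.mul_assoc, hDC']

lemma Matrix.exists_basis_of_isIdempotentElem (hπ : IsNilpotent (LinearMap.ker π.toLinearMap))
    {e : Matrix n n A} (he : IsIdempotentElem e) :
    ∃ (d : ℕ) (ξ : Fin d → n → A), (∀ a, e.mulVec (ξ a) = ξ a) ∧
      ∀ w : n → A, e.mulVec w = w → ∃! coef : Fin d → A, w = ∑ a, fun p => ξ a p * coef a := by
  obtain ⟨d, X, Z, hXZ, hZX⟩ :=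
    Matrix.exists_mul_eq_and_mul_eq_one_of_isIdempotentElem_of_isNilpotent_ker hπ he
  have hsum (coef : Fin d → A) : (∑ a, fun p => X p a * coef a) = X.mulVec coef := by
    funext p
    simp [Matrix.mulVec, dotProduct]
  refine ⟨d, fun a p => X p a, fun a => ?_, fun w hw => ⟨Z.mulVec w, ?_, fun coef hcoef => ?_⟩⟩
  · have heX : e * X = X := by rw [← hXZ, Matrix.mul_assoc, hZX, Matrix.mul_one]
    funext p
    exact congr_fun (congr_fun heX p) a
  · beta_reduce
    rw [hsum, Matrix.mulVec_mulVec, hXZ, hw]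
  · beta_reduce at hcoef
    rw [hcoef, hsum, Matrix.mulVec_mulVec, hZX, Matrix.one_mulVec]

end SplittingIdempotents

lemma mem_spectrum_of_isNilpotent_sub_algebraMap_mul {K B : Type*} [CommRing K] [Ring B]
    [Algebra K B] {b f : B} {μ : K} (hf : IsIdempotentElem f) (hf0 : f ≠ 0) (hbf : Commute b f)
    (h : IsNilpotent ((b - algebraMap K B μ) * f)) : μ ∈ spectrum K b := by
  intro hμ
  obtain ⟨N, hN⟩ := h
  have hunit : IsUnit ((b - algebraMap K B μ) ^ (N + 1)) := by
    simpa using (hμ.neg.pow (N + 1) : IsUnit ((-(algebraMap K B μ - b)) ^ (N + 1)))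
  have : (b - algebraMap K B μ) ^ (N + 1) * f = 0 := by
    rw [← hf.pow_succ_eq N, ← (hbf.sub_left (Algebra.commutes μ f)).mul_pow, pow_succ, hN,
      zero_mul]
  exact hf0 ((hunit.mul_right_eq_zero).mp this)

lemma Ideal.exists_algHom_quotient_mk_algebraMap_eq (K : Type*) {S : Type*} [Field K]
    [IsAlgClosed K] [CommRing S] [Algebra K S] [FiniteDimensional K S] {I : Ideal S}
    (hI : I.IsMaximal) :
    ∃ χ : S →ₐ[K] K, ∀ a, Ideal.Quotient.mk I (algebraMap K S (χ a)) = Ideal.Quotient.mk I a := by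
  let := Ideal.Quotient.field I
  have : Algebra.IsIntegral K (S ⧸ I) := Algebra.IsIntegral.of_finite K _
  let res := AlgEquiv.ofBijective (Algebra.ofId K (S ⧸ I))
    IsAlgClosed.algebraMap_bijective_of_isIntegral
  refine ⟨(res.symm : S ⧸ I →ₐ[K] K).comp (Ideal.Quotient.mkₐ K I), fun a => ?_⟩
  rw [← Ideal.Quotient.mkₐ_eq_mk K, AlgHom.commutes]
  exact res.apply_symm_apply _

theorem exists_completeOrthogonalIdempotents_isNilpotent_sub_algebraMap_mul
    {K S : Type*} [Field K] [IsAlgClosed K] [CommRing S] [Algebra K S] [FiniteDimensional K S] :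
    ∃ (l : ℕ) (ε : Fin l → S) (χ : Fin l → S →ₐ[K] K), CompleteOrthogonalIdempotents ε ∧
      (∀ j, ε j ≠ 0) ∧ ∀ j a, IsNilpotent ((a - algebraMap K S (χ j a)) * ε j) := by
  classical
  have : IsArtinianRing S := IsArtinianRing.of_finite K S
  let ι := MaximalSpectrum S
  have : Fintype ι := Fintype.ofFinite ι
  let φ : S →+* ∀ I : ι, S ⧸ I.asIdeal :=
    (IsArtinianRing.quotNilradicalEquivPi S).toRingHom.comp (Ideal.Quotient.mk _)
  have hφ : ∀ x ∈ RingHom.ker φ, IsNilpotent x := fun x hx =>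
    mem_nilradical.mp <| Ideal.Quotient.eq_zero_iff_mem.mp <|
      (map_eq_zero_iff _ (IsArtinianRing.quotNilradicalEquivPi S).injective).mp hx
  have hφsurj : Function.Surjective φ :=
    (IsArtinianRing.quotNilradicalEquivPi S).surjective.comp Ideal.Quotient.mk_surjective
  obtain ⟨ε, hε, hφε⟩ := CompleteOrthogonalIdempotents.lift_of_isNilpotent_ker φ hφ
    (CompleteOrthogonalIdempotents.single fun I : ι => S ⧸ I.asIdeal)
    fun _ => RingHom.mem_range.mpr (hφsurj _)
  have hε_single (I J : ι) :
      Ideal.Quotient.mk J.asIdeal (ε I) = (Pi.single I 1 : ∀ J : ι, S ⧸ J.asIdeal) J :=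
    congr_fun (congr_fun hφε I) J
  choose χ hχ using fun I : ι => Ideal.exists_algHom_quotient_mk_algebraMap_eq K I.isMaximal
  let σ := (Fintype.equivFin ι).symm
  refine ⟨Fintype.card ι, ε ∘ σ, χ ∘ σ, (CompleteOrthogonalIdempotents.equiv σ).mpr hε,
    fun j h => ?_, fun j a => hφ _ ?_⟩
  · have := hε_single (σ j) (σ j)
    simp only [Function.comp_apply] at h
    rw [h, map_zero, Pi.single_eq_same] at this
    exact one_ne_zero this.symm
  · rw [RingHom.mem_ker]
    funext I
    suffices Ideal.Quotient.mk I.asIdeal ((a - algebraMap K S (χ (σ j) a)) * ε (σ j)) = 0 from this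
    rw [map_mul, hε_single]
    obtain rfl | hI := eq_or_ne I (σ j)
    · rw [map_sub, hχ, sub_self, zero_mul]
    · rw [Pi.single_eq_of_ne hI, mul_zero]

open scoped IsMulCommutative in
theorem exists_completeOrthogonalIdempotents_of_pairwise_commute
    {K B : Type*} [Field K] [IsAlgClosed K] [Ring B] [Algebra K B] [FiniteDimensional K B]
    {ι : Type*} (m : ι → B) (hm : ∀ i j, Commute (m i) (m j)) :
    ∃ (l : ℕ) (e : Fin l → B) (μ : Fin l → ι → K), CompleteOrthogonalIdempotents e ∧
      (∀ j, e j ≠ 0) ∧ (∀ i j, Commute (e j) (m i)) ∧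
      ∀ j i, IsNilpotent ((m i - algebraMap K B (μ j i)) * e j) := by
  let S := Algebra.adjoin K (Set.range m)
  have : IsMulCommutative S := Algebra.isMulCommutative_adjoin K <| by
    rintro _ ⟨i, rfl⟩ _ ⟨j, rfl⟩
    exact hm i j
  let m' (i : ι) : S := ⟨m i, Algebra.subset_adjoin ⟨i, rfl⟩⟩
  obtain ⟨l, ε, χ, hε, hε0, hnil⟩ :=
    exists_completeOrthogonalIdempotents_isNilpotent_sub_algebraMap_mul (K := K) (S := S)
  exact ⟨l, fun j => ε j, fun j i => χ j (m' i), hε.map S.val.toRingHom,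
    fun j h => hε0 j (Subtype.ext h), fun i j => (Commute.all (ε j) (m' i)).map S.val,
    fun j i => (hnil j (m' i)).map S.val⟩

section Decomposition

variable {R : Type*} [Semiring R] {n : Type*} [Fintype n] [DecidableEq n]

lemma CompleteOrthogonalIdempotents.existsUnique_mulVec_eq_self_and_sum_eq {ι : Type*}
    [Fintype ι] {e : ι → Matrix n n R} (he : CompleteOrthogonalIdempotents e) (v : n → R) :
    ∃! c : ι → n → R, (∀ j, (e j).mulVec (c j) = c j) ∧ v = ∑ j, c j := by
  refine ⟨fun j => (e j).mulVec v, ⟨fun j => by rw [Matrix.mulVec_mulVec, (he.idem j).eq], ?_⟩, ?_⟩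
  · rw [← Matrix.sum_mulVec, he.complete, Matrix.one_mulVec]
  · rintro c ⟨hc, rfl⟩
    funext j
    symm
    calc (e j).mulVec (∑ k, c k) = ∑ k, (e j * e k).mulVec (c k) := by
          rw [Matrix.mulVec_sum]
          exact Finset.sum_congr rfl fun k _ => by rw [← Matrix.mulVec_mulVec, hc k]
      _ = c j := by
          rw [Finset.sum_eq_single j (fun k _ hk => by rw [he.ortho hk.symm, Matrix.zero_mulVec])
            (by simp), (he.idem j).eq, hc j]

end Decomposition

theorem stmt_18_general (s r n : ℕ) (mhat : Fin n → Matrix (Fin r) (Fin r) (Grassmann s))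
    (hcomm : ∀ i j, mhat i * mhat j = mhat j * mhat i) :
    ∃ (l : ℕ) (e : Fin l → Matrix (Fin r) (Fin r) (Grassmann s)),
      -- complete set of orthogonal idempotents
      (∑ j, e j = 1) ∧
      (∀ j j', j ≠ j' → e j * e j' = 0) ∧
      (∀ j, e j * e j = e j) ∧
      -- (1) each `e j` commutes with every `m̂ i`
      (∀ i j, e j * mhat i = mhat i * e j) ∧
      -- (2) direct sum decomposition `Ê = e₁Ê ⊕ ⋯ ⊕ e_lÊ`
      (∀ v : Fin r → Grassmann s,
        ∃! c : Fin l → (Fin r → Grassmann s),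
          (∀ j, (e j).mulVec (c j) = c j) ∧ v = ∑ j, c j) ∧
      -- each summand is a free right Λ-module
      (∀ j, ∃ (dj : ℕ) (ξ : Fin dj → (Fin r → Grassmann s)),
        (∀ a, (e j).mulVec (ξ a) = ξ a) ∧
        (∀ w : Fin r → Grassmann s, (e j).mulVec w = w →
          ∃! coef : Fin dj → Grassmann s, w = ∑ a, fun p => ξ a p * coef a)) ∧
      -- (3) eigenvalue data: on the block of `e j`, the body of `m̂ i` has the single
      -- eigenvalue `lam j i`
      (∃ lam : Fin l → Fin n → ℂ,
        ∀ j i, lam j i ∈ spectrum ℂ (grassmannBody s r (mhat i)) ∧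
          ∃ Npow : ℕ,
            ((grassmannBody s r (mhat i) - lam j i • (1 : Matrix (Fin r) (Fin r) ℂ)) *
              grassmannBody s r (e j)) ^ Npow = 0) := by
  obtain ⟨l, e, μ, he, he0, he_comm, hnil⟩ :=
    exists_completeOrthogonalIdempotents_of_pairwise_commute (K := ℂ) mhat hcomm
  have hπ := ExteriorAlgebra.isNilpotent_ker_algebraMapInv (K := ℂ) (V := Fin s → ℂ)
  let body : Matrix (Fin r) (Fin r) (Grassmann s) →ₐ[ℂ] Matrix (Fin r) (Fin r) ℂ :=
    algebraMapInv.mapMatrix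
  refine ⟨l, e, he.complete, fun j j' h => he.ortho h, fun j => (he.idem j).eq, he_comm,
    he.existsUnique_mulVec_eq_self_and_sum_eq,
    fun j => Matrix.exists_basis_of_isIdempotentElem hπ (he.idem j), μ, fun j i => ?_⟩
  have hnil_body := (hnil j i).map body
  rw [map_mul, map_sub, AlgHom.commutes] at hnil_body
  refine ⟨mem_spectrum_of_isNilpotent_sub_algebraMap_mul ((he.idem j).map body)
    (Matrix.map_ne_zero_of_isIdempotentElem hπ (he.idem j) (he0 j))
    ((he_comm i j).symm.map body) hnil_body, ?_⟩
  rwa [Algebra.algebraMap_eq_smul_one] at hnil_body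

/-- Simultaneous primary decomposition of `Ê = Λ^{⊕r}` under a commuting system of
endomorphisms `m̂₁, …, m̂ₙ`: there is a complete set of orthogonal idempotents commuting
with all `m̂ᵢ`, decomposing `Ê` into a direct sum of free right `Λ`-modules invariant under
all the `m̂ᵢ`, on each of which the body of `m̂ᵢ` has a single eigenvalue `λʲᵢ`. -/
theorem stmt_18 (s r n : ℕ) (mhat : Fin n → Matrix (Fin r) (Fin r) (Grassmann s))
    (hcomm : ∀ i j, mhat i * mhat j = mhat j * mhat i) (hr : 0 < r) :
    ∃ (l : ℕ) (e : Fin l → Matrix (Fin r) (Fin r) (Grassmann s)),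
      -- complete set of orthogonal idempotents
      (∑ j, e j = 1) ∧
      (∀ j j', j ≠ j' → e j * e j' = 0) ∧
      (∀ j, e j * e j = e j) ∧
      -- (1) each `e j` commutes with every `m̂ i`
      (∀ i j, e j * mhat i = mhat i * e j) ∧
      -- (2) direct sum decomposition `Ê = e₁Ê ⊕ ⋯ ⊕ e_lÊ`
      (∀ v : Fin r → Grassmann s,
        ∃! c : Fin l → (Fin r → Grassmann s),
          (∀ j, (e j).mulVec (c j) = c j) ∧ v = ∑ j, c j) ∧
      -- each summand is a free right Λ-module
      (∀ j, ∃ (dj : ℕ) (ξ : Fin dj → (Fin r → Grassmann s)),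
        (∀ a, (e j).mulVec (ξ a) = ξ a) ∧
        (∀ w : Fin r → Grassmann s, (e j).mulVec w = w →
          ∃! coef : Fin dj → Grassmann s, w = ∑ a, fun p => ξ a p * coef a)) ∧
      -- (3) eigenvalue data: on the block of `e j`, the body of `m̂ i` has the single
      -- eigenvalue `lam j i`
      (∃ lam : Fin l → Fin n → ℂ,
        ∀ j i, lam j i ∈ spectrum ℂ (grassmannBody s r (mhat i)) ∧
          ∃ Npow : ℕ,
            ((grassmannBody s r (mhat i) - lam j i • (1 : Matrix (Fin r) (Fin r) ℂ)) *
              grassmannBody s r (e j)) ^ Npow = 0) :=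
  stmt_18_general s r n mhat hcomm
end
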